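/- With notation as in the context, let f ∈ P be a polynomial such that σ_μ(f) − f ∈ I for every μ : Q_0 → ℂˣ. Then the image of f in R = P/I lies in the ℂ-subalgebra of R generated by the images of the two-cycles d_{k,i}·u_{k,i} (for all k ∈ {1,2,3}, 1 ≤ i ≤ p_k) together with the images of D_kU_l for all k, l ∈ {1,2,3}. (That is, the ring of torus invariants R^G is generated as a ℂ-algebra by the set S_1 consisting of the two-cycles and the cycles D_kU_l.) -/

import Mathlib

open MvPolynomial

/-- The index type of the arrow variables: `Sum.inl ⟨k, i⟩` is the downward arrow
`d_{k,i+1}` and `Sum.inr ⟨k, i⟩` is the upward arrow `u_{k,i+1}` (arm `k`, `i : Fin (p k)`). -/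
abbrev ReconArrows (p : Fin 3 → ℕ) : Type := (Σ k : Fin 3, Fin (p k)) ⊕ (Σ k : Fin 3, Fin (p k))

/-- The polynomial ring `P = ℂ[d_{k,i}, u_{k,i}]`. -/
abbrev ReconP (p : Fin 3 → ℕ) : Type := MvPolynomial (ReconArrows p) ℂ

/-- The vertex set `Q₀` of the quiver: `Sum.inl ()` is the top vertex `⊤`,
`Sum.inr (Sum.inl ())` is the bottom vertex `⊥`, and `Sum.inr (Sum.inr (k, i))` is the
arm vertex `v_{k,i}` (only those with `1 ≤ i ≤ p k - 1` actually occur). -/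
abbrev ReconVtx : Type := Unit ⊕ Unit ⊕ (Fin 3 × ℕ)

/-- The vertex `v_{k,i}` on arm `k` (with the convention `v_{k,0} = ⊤`, `v_{k,p_k} = ⊥`). -/
def reconVert (p : Fin 3 → ℕ) (k : Fin 3) (i : ℕ) : ReconVtx :=
  if i = 0 then Sum.inl () else if i = p k then Sum.inr (Sum.inl ())
  else Sum.inr (Sum.inr (k, i))

/-- The tail of an arrow: `d_{k,i+1}` has tail `v_{k,i}`, and `u_{k,i+1}` has tail `v_{k,i+1}`. -/
def reconTail (p : Fin 3 → ℕ) : ReconArrows p → ReconVtx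
  | Sum.inl ⟨k, i⟩ => reconVert p k i
  | Sum.inr ⟨k, i⟩ => reconVert p k (i + 1)

/-- The head of an arrow: `d_{k,i+1}` has head `v_{k,i+1}`, and `u_{k,i+1}` has head `v_{k,i}`. -/
def reconHead (p : Fin 3 → ℕ) : ReconArrows p → ReconVtx
  | Sum.inl ⟨k, i⟩ => reconVert p k (i + 1)
  | Sum.inr ⟨k, i⟩ => reconVert p k i

/-- The conjugation action `σ_μ : P → P` of `μ : Q₀ → ℂˣ`, sending the variable of each
arrow `e` to `μ(t(e))⁻¹ · μ(h(e))` times itself. -/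
noncomputable def reconSigma (p : Fin 3 → ℕ) (μ : ReconVtx → ℂˣ) :
    ReconP p →ₐ[ℂ] ReconP p :=
  aeval fun e => C ((μ (reconTail p e) : ℂ)⁻¹ * (μ (reconHead p e) : ℂ)) * X e

/-- `D_k = d_{k,1}⋯d_{k,p_k}`. -/
noncomputable def ReconD (p : Fin 3 → ℕ) (k : Fin 3) : ReconP p :=
  ∏ i : Fin (p k), X (Sum.inl ⟨k, i⟩)

/-- `U_k = u_{k,1}⋯u_{k,p_k}`. -/
noncomputable def ReconU (p : Fin 3 → ℕ) (k : Fin 3) : ReconP p :=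
  ∏ i : Fin (p k), X (Sum.inr ⟨k, i⟩)

/-- The ideal `I = (D₁ - D₂ + D₃)` generated by the canonical relation. -/
noncomputable def ReconI (p : Fin 3 → ℕ) : Ideal (ReconP p) :=
  Ideal.span {ReconD p 0 - ReconD p 1 + ReconD p 2}

/-- The quotient `R = P/I`. -/
abbrev ReconR (p : Fin 3 → ℕ) : Type := ReconP p ⧸ ReconI p

/-- The quotient algebra map `π : P → R`. -/
noncomputable def reconPi (p : Fin 3 → ℕ) : ReconP p →ₐ[ℂ] ReconR p :=
  Ideal.Quotient.mkₐ ℂ _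

/-!
Grade `P` by `ℤ^{Q₀}`, giving the variable of an arrow the weight `head - tail`. Then `σ_μ`
multiplies the component of weight `ω` by the character value `χ_μ(ω) = ∏ μ(q) ^ ω(q)`. The
relation `D₁ - D₂ + D₃` is homogeneous of weight `⊥ - ⊤`, so `I` is a homogeneous ideal, and
`σ_μ f - f ∈ I` puts every component of `f` of nonzero weight `ω` into `I` (take `μ` with
`χ_μ(ω) ≠ 1`). Hence `f ≡ f₀ mod I`, where `f₀` is the weight-zero component.

A monomial of weight zero has, along each arm `k`, a constant excess `β_k` of `d`-exponents over
`u`-exponents (balance at the arm vertices), and `∑ β_k = 0` (balance at `⊤`). So it is a product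
of two-cycles times `∏ D_k ^ β_k⁺ * ∏ U_l ^ β_l⁻`, and since both halves have the same total
degree, the latter factors into cycles `D_k U_l`.
-/

theorem Finsupp.prod_pow_eq_map_weight {σ M R : Type*} [AddCommMonoid M] [CommMonoid R]
    (w : σ → M) (χ : Multiplicative M →* R) (d : σ →₀ ℕ) :
    (d.prod fun e n => χ (.ofAdd (w e)) ^ n) = χ (.ofAdd (Finsupp.weight w d)) := by
  simp only [Finsupp.weight_apply, Finsupp.sum, ofAdd_sum, map_prod, ofAdd_nsmul, map_pow,
    Finsupp.prod]

namespace MvPolynomial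

variable {σ R : Type*} [CommRing R]

theorem aeval_C_mul_X_monomial (c : σ → R) (d : σ →₀ ℕ) (a : R) :
    aeval (fun e => C (c e) * X e) (monomial d a) =
      monomial d ((d.prod fun e n => c e ^ n) * a) := by
  simp only [aeval_monomial, mul_pow, Finsupp.prod_mul, ← C_pow, ← map_finsuppProd C]
  rw [monomial_eq, C_mul, algebraMap_eq]
  ring

theorem coeff_aeval_C_mul_X (c : σ → R) (f : MvPolynomial σ R) (d : σ →₀ ℕ) :
    coeff d (aeval (fun e => C (c e) * X e) f) = (d.prod fun e n => c e ^ n) * coeff d f := by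
  classical
  induction f using MvPolynomial.induction_on' with
  | monomial d' a =>
    rw [aeval_C_mul_X_monomial, coeff_monomial, coeff_monomial]
    split_ifs with h
    · rw [h]
    · rw [mul_zero]
  | add f g hf hg => rw [map_add, coeff_add, coeff_add, hf, hg, mul_add]

variable {M : Type*} [AddCommMonoid M] (w : σ → M)

theorem weightedHomogeneousComponent_aeval_C_mul_X (χ : Multiplicative M →* R) (m : M)
    (f : MvPolynomial σ R) :
    weightedHomogeneousComponent w m (aeval (fun e => C (χ (.ofAdd (w e))) * X e) f) =
      C (χ (.ofAdd m)) * weightedHomogeneousComponent w m f := by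
  classical
  ext d
  rw [coeff_C_mul, coeff_weightedHomogeneousComponent, coeff_weightedHomogeneousComponent,
    coeff_aeval_C_mul_X, Finsupp.prod_pow_eq_map_weight]
  split_ifs with h
  · rw [h]
  · rw [mul_zero]

attribute [local instance] weightedGradedAlgebra in
theorem weightedHomogeneousComponent_mem_of_aeval_sub_mem [DecidableEq M] {K : Type*} [Field K]
    {w : σ → M} {J : Ideal (MvPolynomial σ K)}
    (hJ : J.IsHomogeneous (weightedHomogeneousSubmodule K w)) {χ : Multiplicative M →* K}
    {m : M} (hχ : χ (.ofAdd m) ≠ 1) {f : MvPolynomial σ K}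
    (hf : aeval (fun e => C (χ (.ofAdd (w e))) * X e) f - f ∈ J) :
    weightedHomogeneousComponent w m f ∈ J := by
  have h := weightedHomogeneousComponent_mem_of_mem K w hJ hf m
  rw [map_sub, weightedHomogeneousComponent_aeval_C_mul_X, ← sub_one_mul, ← C_1, ← map_sub] at h
  exact (Ideal.unit_mul_mem_iff_mem J ((sub_ne_zero.mpr hχ).isUnit.map C)).mp h

theorem sub_weightedHomogeneousComponent_mem {J : Ideal (MvPolynomial σ R)}
    {f : MvPolynomial σ R} (m₀ : M) (hJ : ∀ m ≠ m₀, weightedHomogeneousComponent w m f ∈ J) :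
    f - weightedHomogeneousComponent w m₀ f ∈ J := by
  classical
  obtain ⟨s, hm₀, hs⟩ :
      ∃ s : Finset M, m₀ ∈ s ∧ ∑ m ∈ s, weightedHomogeneousComponent w m f = f := by
    refine ⟨insert m₀ (weightedHomogeneousComponent_finsupp (w := w) (φ := f)).toFinset,
      Finset.mem_insert_self _ _, ?_⟩
    rw [← finsum_eq_sum_of_support_subset, sum_weightedHomogeneousComponent]
    intro m hm
    exact Finset.mem_insert_of_mem ((Set.Finite.mem_toFinset _).mpr hm)
  nth_rewrite 1 [← hs]
  rw [← Finset.sum_erase_eq_sub hm₀]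
  exact J.sum_mem fun m hm => hJ m (Finset.ne_of_mem_erase hm)

end MvPolynomial

theorem Fintype.prod_pow_add_single {M ι : Type*} [CommMonoid M] [Fintype ι] [DecidableEq ι]
    (z : ι → M) (k : ι → ℕ) (i : ι) :
    ∏ l, z l ^ (k l + (Pi.single i 1 : ι → ℕ) l) = (∏ l, z l ^ k l) * z i := by
  simp only [pow_add, Finset.prod_mul_distrib]
  simp [Pi.single_apply, pow_ite]

theorem exists_eq_add_single_of_ne_zero {ι : Type*} [DecidableEq ι] {k : ι → ℕ} {i : ι}
    (hk : k i ≠ 0) : ∃ k' : ι → ℕ, k = k' + Pi.single i 1 := by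
  refine ⟨k - Pi.single i 1, funext fun l => ?_⟩
  by_cases hl : l = i
  · subst hl
    simp only [Pi.add_apply, Pi.sub_apply, Pi.single_eq_same]
    omega
  · simp [hl]

theorem Submonoid.prod_pow_mul_prod_pow_mem_closure {M ι : Type*} [CommMonoid M] [Fintype ι]
    (x y : ι → M) {m n : ι → ℕ} (h : ∑ i, m i = ∑ i, n i) :
    (∏ i, x i ^ m i) * ∏ i, y i ^ n i ∈
      Submonoid.closure (Set.range fun ij : ι × ι => x ij.1 * y ij.2) := by
  classical
  induction hN : ∑ i, m i generalizing m n with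
  | zero =>
    have hm : ∀ i, m i = 0 := by simpa using hN
    have hn : ∀ i, n i = 0 := by simpa [h] using hN
    simp [hm, hn, one_mem]
  | succ N ih =>
    obtain ⟨i, hi⟩ : ∃ i, m i ≠ 0 := by
      by_contra! hm
      simp [hm] at hN
    obtain ⟨j, hj⟩ : ∃ j, n j ≠ 0 := by
      by_contra! hn
      simp [hn, hN] at h
    obtain ⟨m, rfl⟩ := exists_eq_add_single_of_ne_zero hi
    obtain ⟨n, rfl⟩ := exists_eq_add_single_of_ne_zero hj
    simp only [Pi.add_apply, Finset.sum_add_distrib, Finset.sum_pi_single', Finset.mem_univ,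
      if_true] at h hN
    rw [Pi.add_def, Pi.add_def, Fintype.prod_pow_add_single, Fintype.prod_pow_add_single,
      mul_mul_mul_comm]
    exact mul_mem (ih (by omega) (by omega)) (subset_closure ⟨(i, j), rfl⟩)

theorem Sigma.mk_eq_mk_fin_iff {ι : Type*} {n : ι → ℕ} {k k' : ι} (j : Fin (n k')) {i : ℕ}
    (hi : i < n k) : (⟨k', j⟩ : Σ k, Fin (n k)) = ⟨k, ⟨i, hi⟩⟩ ↔ k' = k ∧ (j : ℕ) = i := by
  constructor
  · rintro ⟨⟩
    exact ⟨rfl, rfl⟩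
  · rintro ⟨rfl, rfl⟩
    rfl

noncomputable def torusChar {V : Type*} (μ : V → ℂˣ) : Multiplicative (V →₀ ℤ) →* ℂˣ :=
  AddMonoidHom.toMultiplicativeLeft
    (Finsupp.liftAddHom fun q => zmultiplesHom _ (Additive.ofMul (μ q)))

section TorusChar

variable {V : Type*} (μ : V → ℂˣ)

theorem torusChar_ofAdd (ω : V →₀ ℤ) : torusChar μ (.ofAdd ω) = ω.prod fun q n => μ q ^ n := by
  simp [torusChar, Finsupp.liftAddHom_apply, Finsupp.sum, Finsupp.prod, toMul_sum]

theorem torusChar_ofAdd_single (q : V) (n : ℤ) :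
    torusChar μ (.ofAdd (Finsupp.single q n)) = μ q ^ n := by
  rw [torusChar_ofAdd, Finsupp.prod_single_index (zpow_zero _)]

theorem exists_torusChar_ne_one {m : V →₀ ℤ} (hm : m ≠ 0) :
    ∃ μ : V → ℂˣ, torusChar μ (.ofAdd m) ≠ 1 := by
  classical
  obtain ⟨q, hq⟩ := Finsupp.ne_iff.mp hm
  refine ⟨Pi.mulSingle q (Units.mk0 2 two_ne_zero), ?_⟩
  rw [torusChar_ofAdd, Finsupp.prod_eq_single q (fun q' _ hq' => by simp [hq']) (by simp),
    Pi.mulSingle_eq_same, Ne, Units.ext_iff, Units.val_zpow_eq_zpow_val, Units.val_mk0,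
    Units.val_one, ← Complex.ofReal_ofNat, ← Complex.ofReal_zpow, Complex.ofReal_eq_one,
    zpow_eq_one_iff_right₀ (by norm_num) (by norm_num)]
  exact hq

end TorusChar

section Grading

variable (p : Fin 3 → ℕ)

noncomputable def arrowWeight (e : ReconArrows p) : ReconVtx →₀ ℤ :=
  Finsupp.single (reconHead p e) 1 - Finsupp.single (reconTail p e) 1

theorem arrowWeight_inl (x : Σ k, Fin (p k)) :
    arrowWeight p (.inl x) =
      Finsupp.single (reconVert p x.1 (x.2 + 1)) 1 - Finsupp.single (reconVert p x.1 x.2) 1 :=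
  rfl

theorem arrowWeight_inr (x : Σ k, Fin (p k)) :
    arrowWeight p (.inr x) = -arrowWeight p (.inl x) :=
  (neg_sub _ _).symm

theorem reconSigma_eq_aeval (μ : ReconVtx → ℂˣ) :
    reconSigma p μ =
      aeval fun e => C ((Units.coeHom ℂ).comp (torusChar μ) (.ofAdd (arrowWeight p e))) * X e := by
  rw [reconSigma]
  congr
  funext e
  simp [arrowWeight, ofAdd_sub, torusChar_ofAdd_single, div_eq_inv_mul]

theorem reconVert_zero (k : Fin 3) : reconVert p k 0 = Sum.inl () := rfl

theorem reconVert_self {k : Fin 3} (hk : p k ≠ 0) :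
    reconVert p k (p k) = Sum.inr (Sum.inl ()) := by
  simp [reconVert, hk]

theorem isWeightedHomogeneous_reconD {k : Fin 3} (hk : p k ≠ 0) :
    IsWeightedHomogeneous (arrowWeight p) (ReconD p k)
      (Finsupp.single (Sum.inr (Sum.inl ())) 1 - Finsupp.single (Sum.inl ()) 1) := by
  have hsum : ∑ i : Fin (p k), arrowWeight p (.inl ⟨k, i⟩) =
      Finsupp.single (Sum.inr (Sum.inl ())) 1 - Finsupp.single (Sum.inl ()) 1 := by
    simp only [arrowWeight_inl]
    rw [Fin.sum_univ_eq_sum_range (fun i => Finsupp.single (reconVert p k (i + 1)) (1 : ℤ) -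
        Finsupp.single (reconVert p k i) 1),
      Finset.sum_range_sub (fun i => Finsupp.single (reconVert p k i) (1 : ℤ)), reconVert_zero,
      reconVert_self p hk]
  rw [← hsum]
  exact IsWeightedHomogeneous.prod _ _ _ fun i _ => isWeightedHomogeneous_X ℂ _ _

attribute [local instance] weightedGradedAlgebra in
theorem reconI_isHomogeneous (hp : ∀ k, 0 < p k) :
    (ReconI p).IsHomogeneous (weightedHomogeneousSubmodule ℂ (arrowWeight p)) := by
  have hD := fun k => isWeightedHomogeneous_reconD p (hp k).ne'
  refine Ideal.homogeneous_span _ _ ?_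
  rintro _ rfl
  exact ⟨_, ((hD 0).sub (hD 1)).add (hD 2)⟩

end Grading

section Balance

variable {p : Fin 3 → ℕ} (d : ReconArrows p →₀ ℕ)

def armBalance (x : Σ k, Fin (p k)) : ℤ := d (.inl x) - d (.inr x)

theorem weight_arrowWeight_apply (v : ReconVtx) :
    Finsupp.weight (arrowWeight p) d v = ∑ x, armBalance d x * arrowWeight p (.inl x) v := by
  rw [Finsupp.weight_apply, Finsupp.sum_fintype _ _ (by simp), Finsupp.finsetSum_apply,
    Fintype.sum_sum_type, ← Finset.sum_add_distrib]
  refine Finset.sum_congr rfl fun x _ => ?_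
  simp only [arrowWeight_inr, Finsupp.smul_apply, Finsupp.neg_apply, nsmul_eq_mul, armBalance]
  ring

theorem reconVert_eq_top_iff (k : Fin 3) (i : ℕ) : reconVert p k i = Sum.inl () ↔ i = 0 := by
  unfold reconVert
  split_ifs <;> simp_all

theorem reconVert_eq_arm_iff {k : Fin 3} {i : ℕ} (hi0 : i ≠ 0) (hik : i < p k) (k' : Fin 3)
    (j : ℕ) : reconVert p k' j = Sum.inr (Sum.inr (k, i)) ↔ k' = k ∧ j = i := by
  unfold reconVert
  split_ifs with h0 hpk
  · simp only [false_iff]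
    rintro ⟨rfl, rfl⟩
    exact hi0 h0
  · simp only [Sum.inr.injEq, reduceCtorEq, false_iff]
    rintro ⟨rfl, rfl⟩
    exact hik.ne hpk
  · simp

theorem weight_arrowWeight_apply_top (hp : ∀ k, 0 < p k) :
    Finsupp.weight (arrowWeight p) d (Sum.inl ()) = -∑ k, armBalance d ⟨k, ⟨0, hp k⟩⟩ := by
  rw [weight_arrowWeight_apply, Fintype.sum_sigma, ← Finset.sum_neg_distrib]
  refine Finset.sum_congr rfl fun k _ => ?_
  have hzero (j : Fin (p k)) : (j : ℕ) = 0 ↔ j = ⟨0, hp k⟩ := (Fin.ext_iff (b := ⟨0, hp k⟩)).symm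
  simp [arrowWeight_inl, Finsupp.single_apply, reconVert_eq_top_iff, hzero]

theorem weight_arrowWeight_apply_arm {k : Fin 3} {i : ℕ} (hi : i + 1 < p k) :
    Finsupp.weight (arrowWeight p) d (Sum.inr (Sum.inr (k, i + 1))) =
      armBalance d ⟨k, ⟨i, by omega⟩⟩ - armBalance d ⟨k, ⟨i + 1, hi⟩⟩ := by
  have hhead (x : Σ k, Fin (p k)) :
      reconVert p x.1 (x.2 + 1) = Sum.inr (Sum.inr (k, i + 1)) ↔ x = ⟨k, ⟨i, by omega⟩⟩ := by
    rw [reconVert_eq_arm_iff (Nat.succ_ne_zero i) hi, Sigma.mk_eq_mk_fin_iff,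
      Nat.add_right_cancel_iff]
  have htail (x : Σ k, Fin (p k)) :
      reconVert p x.1 x.2 = Sum.inr (Sum.inr (k, i + 1)) ↔ x = ⟨k, ⟨i + 1, hi⟩⟩ := by
    rw [reconVert_eq_arm_iff (Nat.succ_ne_zero i) hi, Sigma.mk_eq_mk_fin_iff]
  simp only [weight_arrowWeight_apply, arrowWeight_inl, Finsupp.sub_apply, Finsupp.single_apply,
    hhead, htail]
  simp [mul_sub, Finset.sum_sub_distrib]

variable {d}

theorem armBalance_eq_of_weight_eq_zero (hw : Finsupp.weight (arrowWeight p) d = 0) (k : Fin 3)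
    (j : Fin (p k)) : armBalance d ⟨k, j⟩ = armBalance d ⟨k, ⟨0, j.pos⟩⟩ := by
  obtain ⟨j, hj⟩ := j
  induction j with
  | zero => rfl
  | succ i ih =>
    have h := weight_arrowWeight_apply_arm d hj
    rw [hw, Finsupp.zero_apply] at h
    rw [← ih (by omega)]
    omega

theorem sum_armBalance_eq_zero (hp : ∀ k, 0 < p k) (hw : Finsupp.weight (arrowWeight p) d = 0) :
    ∑ k, armBalance d ⟨k, ⟨0, hp k⟩⟩ = 0 := by
  simpa [hw] using weight_arrowWeight_apply_top d hp

end Balance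

section Cycles

variable (p : Fin 3 → ℕ)

def reconCycles : Set (ReconP p) :=
  (Set.range fun x : Σ k, Fin (p k) => X (.inl x) * X (.inr x)) ∪
    Set.range fun kl : Fin 3 × Fin 3 => ReconD p kl.1 * ReconU p kl.2

theorem monomial_one_eq_prod (d : ReconArrows p →₀ ℕ) :
    (monomial d 1 : ReconP p) = (∏ x, X (.inl x) ^ d (.inl x)) * ∏ x, X (.inr x) ^ d (.inr x) := by
  rw [monomial_eq, C_1, one_mul, Finsupp.prod_fintype _ _ (by simp), Fintype.prod_sum_type]

theorem prod_X_inl_pow (t : Fin 3 → ℕ) :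
    ∏ x : Σ k, Fin (p k), (X (.inl x) : ReconP p) ^ t x.1 = ∏ k, ReconD p k ^ t k := by
  simp only [Fintype.prod_sigma, ReconD, Finset.prod_pow]

theorem prod_X_inr_pow (t : Fin 3 → ℕ) :
    ∏ x : Σ k, Fin (p k), (X (.inr x) : ReconP p) ^ t x.1 = ∏ k, ReconU p k ^ t k := by
  simp only [Fintype.prod_sigma, ReconU, Finset.prod_pow]

variable {p}

theorem monomial_mem_adjoin_reconCycles (hp : ∀ k, 0 < p k) {d : ReconArrows p →₀ ℕ}
    (hw : Finsupp.weight (arrowWeight p) d = 0) :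
    monomial d (1 : ℂ) ∈ Algebra.adjoin ℂ (reconCycles p) := by
  set β : Fin 3 → ℤ := fun k => armBalance d ⟨k, ⟨0, hp k⟩⟩
  set c : (Σ k, Fin (p k)) → ℕ := fun x => min (d (.inl x)) (d (.inr x))
  have hβ (x : Σ k, Fin (p k)) : (d (.inl x) : ℤ) - d (.inr x) = β x.1 :=
    armBalance_eq_of_weight_eq_zero hw x.1 x.2
  have hinl (x : Σ k, Fin (p k)) : d (.inl x) = c x + (β x.1).toNat := by
    have := hβ x
    simp only [c]
    omega
  have hinr (x : Σ k, Fin (p k)) : d (.inr x) = c x + (-β x.1).toNat := by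
    have := hβ x
    simp only [c]
    omega
  have hsum : ∑ k, (β k).toNat = ∑ k, (-β k).toNat := by
    rw [← Nat.cast_inj (R := ℤ), Nat.cast_sum, Nat.cast_sum, ← sub_eq_zero,
      ← Finset.sum_sub_distrib]
    simpa only [Int.toNat_sub_toNat_neg] using sum_armBalance_eq_zero hp hw
  rw [monomial_one_eq_prod]
  simp only [hinl, hinr, pow_add, Finset.prod_mul_distrib]
  rw [prod_X_inl_pow p fun k => (β k).toNat, prod_X_inr_pow p fun k => (-β k).toNat,
    mul_mul_mul_comm, ← Finset.prod_mul_distrib]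
  have hclosure :
      Submonoid.closure (Set.range fun kl : Fin 3 × Fin 3 => ReconD p kl.1 * ReconU p kl.2) ≤
        (Algebra.adjoin ℂ (reconCycles p)).toSubmonoid :=
    Submonoid.closure_le.mpr fun _ h => Algebra.subset_adjoin (Or.inr h)
  refine mul_mem (prod_mem fun x _ => ?_)
    (hclosure (Submonoid.prod_pow_mul_prod_pow_mem_closure _ _ hsum))
  rw [← mul_pow]
  exact pow_mem (Algebra.subset_adjoin (Set.mem_union_left _ (Set.mem_range_self x))) _

theorem weightedHomogeneousComponent_zero_mem_adjoin_reconCycles (hp : ∀ k, 0 < p k)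
    (f : ReconP p) :
    weightedHomogeneousComponent (arrowWeight p) 0 f ∈ Algebra.adjoin ℂ (reconCycles p) := by
  rw [(weightedHomogeneousComponent (arrowWeight p) 0 f).as_sum]
  refine Subalgebra.sum_mem _ fun d hd => ?_
  rw [← mul_one (coeff d _), ← smul_eq_mul, ← smul_monomial]
  exact Subalgebra.smul_mem _ (monomial_mem_adjoin_reconCycles hp
    (weightedHomogeneousComponent_isWeightedHomogeneous 0 f (mem_support_iff.mp hd))) _

end Cycles

/-- The torus-invariant ring `R^G` is generated as a `ℂ`-algebra by the set `S₁`
consisting of the two-cycles `d_{k,i}u_{k,i}` together with the cycles `D_kU_l`: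
if `σ_μ(f) - f ∈ I` for every `μ : Q₀ → ℂˣ`, then the image of `f` in `R = P/I` lies
in the `ℂ`-subalgebra generated by the images of these cycles. -/
theorem stmt_14 (p : Fin 3 → ℕ) (hp : ∀ k, 0 < p k)
    (f : ReconP p)
    (hf : ∀ μ : ReconVtx → ℂˣ, reconSigma p μ f - f ∈ ReconI p) :
    reconPi p f ∈ Algebra.adjoin ℂ
      ((Set.range fun ki : Σ k : Fin 3, Fin (p k) =>
          reconPi p (X (Sum.inl ki) * X (Sum.inr ki))) ∪
       Set.range fun kl : Fin 3 × Fin 3 => reconPi p (ReconD p kl.1 * ReconU p kl.2)) := by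
  have hcomp : ∀ m ≠ 0, weightedHomogeneousComponent (arrowWeight p) m f ∈ ReconI p := by
    intro m hm
    obtain ⟨μ, hμ⟩ := exists_torusChar_ne_one hm
    refine weightedHomogeneousComponent_mem_of_aeval_sub_mem (reconI_isHomogeneous p hp)
      (χ := (Units.coeHom ℂ).comp (torusChar μ)) (by simpa using hμ) ?_
    rw [← reconSigma_eq_aeval]
    exact hf μ
  have hπ : reconPi p f = reconPi p (weightedHomogeneousComponent (arrowWeight p) 0 f) :=
    Ideal.Quotient.eq.mpr (sub_weightedHomogeneousComponent_mem _ 0 hcomp)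
  have himage : reconPi p '' reconCycles p =
      (Set.range fun ki : Σ k : Fin 3, Fin (p k) => reconPi p (X (Sum.inl ki) * X (Sum.inr ki))) ∪
        Set.range fun kl : Fin 3 × Fin 3 => reconPi p (ReconD p kl.1 * ReconU p kl.2) := by
    rw [reconCycles, Set.image_union, ← Set.range_comp, ← Set.range_comp]
    rfl
  rw [hπ, ← himage, Algebra.adjoin_image]
  exact Subalgebra.mem_map.mpr
    ⟨_, weightedHomogeneousComponent_zero_mem_adjoin_reconCycles hp f, rfl⟩
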